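/- arXiv:2510.19998 — 2 statements merged into one kernel-verified Lean document; each statement's English description precedes it below -/
import Mathlib

section
/- Let (X,d) be a Polish metric space, p ≥ 1, and let G be a topological group acting continuously on X by isometries. Then for every choice of μ, ν ∈ P_p(X), the map G → [0,∞), g ↦ W_p(g_#μ, ν), is continuous. -/
/-!
Pushing a coupling of `h_#μ` and `ν` forward along `(g h⁻¹, id)` and applying Minkowski's
inequality shows that `W_p(g_#μ, ν)` and `W_p(h_#μ, ν)` differ by at most
`(∫ d(g x, h x)^p dμ)^{1/p}`, so it suffices that this cost tends to `0` as `g → h`.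
The maps `x ↦ g x` are 1-Lipschitz, so the pointwise convergence `g x → h x` is uniform on any
finite union of small balls. Separability lets finitely many such balls carry all but an
arbitrarily small part of the finite measure `(1 + d(x, x₀)^p) μ`, and outside them
`d(g x, h x)^p` is dominated by a multiple of `1 + d(x, x₀)^p`.
-/

open MeasureTheory ENNReal Set

noncomputable section

/-- The set of admissible couplings of two measures. -/
def Adm {X : Type*} [MeasurableSpace X] (μ ν : Measure X) : Set (Measure (X × X)) :=
  {π | IsProbabilityMeasure π ∧ π.map Prod.fst = μ ∧ π.map Prod.snd = ν}

/-- The `p`-th Wasserstein distance. -/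
def Wp {X : Type*} [MeasurableSpace X] [PseudoEMetricSpace X] (p : ℝ) (μ ν : Measure X) :
    ℝ≥0∞ :=
  (⨅ π ∈ Adm μ ν, ∫⁻ z : X × X, edist z.1 z.2 ^ p ∂π) ^ (1 / p)

/-- Finite `p`-th moment. -/
def HasFinitePMoment {X : Type*} [MeasurableSpace X] [PseudoEMetricSpace X] (p : ℝ)
    (μ : Measure X) : Prop :=
  ∃ x₀ : X, ∫⁻ x, edist x x₀ ^ p ∂μ ≠ ⊤

open Filter Topology TopologicalSpace Metric

theorem ENNReal.continuousAt_of_le_add {α : Type*} [TopologicalSpace α] {F C : α → ℝ≥0∞}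
    {a : α} (hC : Tendsto C (𝓝 a) (𝓝 0)) (hle : ∀ x, F x ≤ F a + C x)
    (hge : ∀ x, F a ≤ F x + C x) : ContinuousAt F a := by
  refine tendsto_order.2 ⟨fun b hb => ?_, fun b hb => ?_⟩
  · obtain ⟨r, hr, hbr⟩ := ENNReal.lt_iff_exists_add_pos_lt.1 hb
    filter_upwards [(tendsto_order.1 hC).2 r (by exact_mod_cast hr)] with x hx
    exact (ENNReal.add_lt_add_iff_right coe_ne_top).1
      (hbr.trans_le ((hge x).trans (by gcongr)))
  · obtain ⟨r, hr, hbr⟩ := ENNReal.lt_iff_exists_add_pos_lt.1 hb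
    filter_upwards [(tendsto_order.1 hC).2 r (by exact_mod_cast hr)] with x hx
    exact (hle x).trans_lt ((ENNReal.add_lt_add_left hb.ne_top hx).trans hbr)

theorem map_prodMap_mem_Adm {X : Type*} [MeasurableSpace X] {μ ν : Measure X}
    {π : Measure (X × X)} (hπ : π ∈ Adm μ ν) {φ : X → X} (hφ : Measurable φ) :
    π.map (Prod.map φ id) ∈ Adm (μ.map φ) ν := by
  obtain ⟨hprob, hfst, hsnd⟩ := hπ
  have hT : Measurable (Prod.map φ (id : X → X)) := hφ.prodMap measurable_id
  refine ⟨Measure.isProbabilityMeasure_map hT.aemeasurable, ?_, ?_⟩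
  · rw [Measure.map_map measurable_fst hT, ← hfst, Measure.map_map hφ measurable_fst]
    rfl
  · rw [Measure.map_map measurable_snd hT, ← hsnd]
    rfl

section PseudoEMetric

variable {X : Type*} [PseudoEMetricSpace X]

theorem edist_apply_le_edist_apply_add {Z : Type*} [PseudoEMetricSpace Z] {f g : X → Z}
    (hf : LipschitzWith 1 f) (hg : LipschitzWith 1 g) (x x₀ : X) :
    edist (f x) (g x) ≤ edist (f x₀) (g x₀) + 2 * edist x x₀ := by
  have hf' : edist (f x) (f x₀) ≤ edist x x₀ := by simpa using hf.edist_le_mul x x₀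
  have hg' : edist (g x₀) (g x) ≤ edist x x₀ := by simpa [edist_comm] using hg.edist_le_mul x x₀
  calc edist (f x) (g x) ≤ edist (f x) (f x₀) + edist (f x₀) (g x₀) + edist (g x₀) (g x) :=
        edist_triangle4 _ _ _ _
    _ ≤ edist x x₀ + edist (f x₀) (g x₀) + edist x x₀ := by gcongr
    _ = edist (f x₀) (g x₀) + 2 * edist x x₀ := by ring

theorem exists_finite_measure_compl_biUnion_eball_lt [SeparableSpace X] [MeasurableSpace X]
    [OpensMeasurableSpace X] (ρ : Measure X) [IsFiniteMeasure ρ] {r ε : ℝ≥0∞} (hr : 0 < r)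
    (hε : 0 < ε) : ∃ T : Set X, T.Finite ∧ ρ (⋃ t ∈ T, eball t r)ᶜ < ε := by
  cases isEmpty_or_nonempty X
  · exact ⟨∅, finite_empty, by simp [eq_empty_of_isEmpty, hε]⟩
  set u := denseSeq X
  have hcover : ⋂ n, (eball (u n) r)ᶜ = ∅ := by
    rw [← compl_iUnion, compl_empty_iff, eq_univ_iff_forall]
    intro x
    obtain ⟨_, ⟨n, rfl⟩, hn⟩ := EMetric.mem_closure_iff.1 (denseRange_denseSeq X x) r hr
    exact mem_iUnion.2 ⟨n, mem_eball.2 hn⟩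
  obtain ⟨m, hm⟩ := exists_measure_iInter_lt
    (fun n => isOpen_eball.measurableSet.compl.nullMeasurableSet) hε ⟨0, measure_ne_top ρ _⟩
    hcover
  refine ⟨u '' Iic m, (finite_Iic m).image u, ?_⟩
  simpa [biUnion_image, compl_iUnion] using hm

end PseudoEMetric

section Wasserstein

variable {X : Type*} [PseudoEMetricSpace X] [MeasurableSpace X]

theorem Wp_eq_iInf {p : ℝ} (hp : 0 < p) (μ ν : Measure X) :
    Wp p μ ν = ⨅ π ∈ Adm μ ν, (∫⁻ z : X × X, edist z.1 z.2 ^ p ∂π) ^ (1 / p) :=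
  map_iInf₂ (ENNReal.orderIsoRpow (1 / p) (one_div_pos.2 hp)) _

theorem Wp_le_of_mem_Adm {p : ℝ} (hp : 0 ≤ p) {μ ν : Measure X} {π : Measure (X × X)}
    (hπ : π ∈ Adm μ ν) : Wp p μ ν ≤ (∫⁻ z : X × X, edist z.1 z.2 ^ p ∂π) ^ (1 / p) :=
  ENNReal.rpow_le_rpow (iInf₂_le π hπ) (one_div_nonneg.2 hp)

variable [SecondCountableTopology X] [OpensMeasurableSpace X]

theorem lintegral_edist_rpow_triangle {Ω : Type*} [MeasurableSpace Ω] {μ : Measure Ω} {p : ℝ}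
    (hp : 1 ≤ p) {f g h : Ω → X} (hf : Measurable f) (hg : Measurable g) (hh : Measurable h) :
    (∫⁻ ω, edist (f ω) (h ω) ^ p ∂μ) ^ (1 / p) ≤
      (∫⁻ ω, edist (f ω) (g ω) ^ p ∂μ) ^ (1 / p) + (∫⁻ ω, edist (g ω) (h ω) ^ p ∂μ) ^ (1 / p) :=
  calc (∫⁻ ω, edist (f ω) (h ω) ^ p ∂μ) ^ (1 / p)
      ≤ (∫⁻ ω, (edist (f ω) (g ω) + edist (g ω) (h ω)) ^ p ∂μ) ^ (1 / p) := by
        gcongr with ω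
        exact edist_triangle _ _ _
    _ ≤ _ := ENNReal.lintegral_Lp_add_le (hf.edist hg).aemeasurable (hg.edist hh).aemeasurable hp

theorem Wp_map_le_add {p : ℝ} (hp : 1 ≤ p) (μ ν : Measure X) {φ : X → X} (hφ : Measurable φ) :
    Wp p (μ.map φ) ν ≤ Wp p μ ν + (∫⁻ x, edist (φ x) x ^ p ∂μ) ^ (1 / p) := by
  have hp₀ : 0 < p := zero_lt_one.trans_le hp
  rw [Wp_eq_iInf hp₀ μ ν, ENNReal.iInf_add]
  refine le_iInf fun π => ?_
  rw [ENNReal.iInf_add]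
  refine le_iInf fun hπ => ?_
  calc Wp p (μ.map φ) ν
      ≤ (∫⁻ z : X × X, edist z.1 z.2 ^ p ∂(π.map (Prod.map φ id))) ^ (1 / p) :=
        Wp_le_of_mem_Adm hp₀.le (map_prodMap_mem_Adm hπ hφ)
    _ = (∫⁻ z : X × X, edist (φ z.1) z.2 ^ p ∂π) ^ (1 / p) := by
        rw [lintegral_map (measurable_edist.pow_const p) (hφ.prodMap measurable_id)]
        rfl
    _ ≤ (∫⁻ z : X × X, edist (φ z.1) z.1 ^ p ∂π) ^ (1 / p) +
          (∫⁻ z : X × X, edist z.1 z.2 ^ p ∂π) ^ (1 / p) :=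
        lintegral_edist_rpow_triangle hp (hφ.comp measurable_fst) measurable_fst measurable_snd
    _ = _ := by
        rw [add_comm, ← hπ.2.1,
          lintegral_map ((hφ.edist measurable_id').pow_const p) measurable_fst]

theorem Wp_map_smul_le_add {G : Type*} [Group G] [MulAction G X] [MeasurableConstSMul G X]
    {p : ℝ} (hp : 1 ≤ p) (μ ν : Measure X) (g h : G) :
    Wp p (μ.map (g • ·)) ν ≤
      Wp p (μ.map (h • ·)) ν + (∫⁻ x, edist (g • x) (h • x) ^ p ∂μ) ^ (1 / p) := by
  have hsmul (k : G) : Measurable (k • · : X → X) := measurable_const_smul k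
  have hcomp : ((g * h⁻¹) • · : X → X) ∘ (h • ·) = (g • ·) := by
    ext x
    simp [mul_smul]
  have key := Wp_map_le_add hp (μ.map (h • ·)) ν (hsmul (g * h⁻¹))
  rw [Measure.map_map (hsmul _) (hsmul h), hcomp,
    lintegral_map (((hsmul _).edist measurable_id').pow_const p) (hsmul h)] at key
  simpa only [mul_smul, inv_smul_smul] using key

end Wasserstein

section LipschitzFamily

variable {Y X : Type*} [TopologicalSpace Y] [PseudoEMetricSpace X] {Φ : Y → X → X}
  {y₀ : Y}

theorem eventually_forall_biUnion_eball_edist_le (hΦ : ∀ y, LipschitzWith 1 (Φ y))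
    (hcont : ∀ x, ContinuousAt (Φ · x) y₀) {T : Set X} (hT : T.Finite) {s : ℝ≥0∞}
    (hs : 0 < s) :
    ∀ᶠ y in 𝓝 y₀, ∀ x ∈ ⋃ t ∈ T, eball t (s / 3), edist (Φ y x) (Φ y₀ x) ≤ s := by
  have hs₃ : 0 < s / 3 := ENNReal.div_pos hs.ne' ofNat_ne_top
  filter_upwards [hT.eventually_all.2 fun t _ => EMetric.tendsto_nhds.1 (hcont t) _ hs₃]
    with y hy x hx
  obtain ⟨t, ht, hxt⟩ := mem_iUnion₂.1 hx
  calc edist (Φ y x) (Φ y₀ x) ≤ edist (Φ y t) (Φ y₀ t) + 2 * edist x t :=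
        edist_apply_le_edist_apply_add (hΦ y) (hΦ y₀) x t
    _ ≤ s / 3 + 2 * (s / 3) := by gcongr; exacts [(hy t ht).le, (mem_eball.1 hxt).le]
    _ = s := by rw [two_mul, ← add_assoc, ENNReal.add_thirds]

theorem tendsto_lintegral_edist_rpow_nhds_zero [SeparableSpace X] [MeasurableSpace X]
    [OpensMeasurableSpace X] (hΦ : ∀ y, LipschitzWith 1 (Φ y))
    (hcont : ∀ x, ContinuousAt (Φ · x) y₀) {p : ℝ} (hp : 0 < p) {μ : Measure X}
    [IsFiniteMeasure μ] (hμp : HasFinitePMoment p μ) :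
    Tendsto (fun y => ∫⁻ x, edist (Φ y x) (Φ y₀ x) ^ p ∂μ) (𝓝 y₀) (𝓝 0) := by
  obtain ⟨x₀, hx₀⟩ := hμp
  set K := LpAddConst (ENNReal.ofReal p)⁻¹
  set H : X → ℝ≥0∞ := fun x => K * (1 + 2 ^ p * edist x x₀ ^ p)
  have hH : Measurable H := by fun_prop
  have : IsFiniteMeasure (μ.withDensity H) := by
    refine isFiniteMeasure_withDensity ?_
    rw [lintegral_const_mul' _ _ (LpAddConst_lt_top _).ne, lintegral_add_left measurable_const,
      lintegral_const_mul' _ _ (rpow_ne_top_of_nonneg hp.le ofNat_ne_top)]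
    exact mul_ne_top (LpAddConst_lt_top _).ne
      (add_ne_top.2 ⟨by simp, mul_ne_top (rpow_ne_top_of_nonneg hp.le ofNat_ne_top) hx₀⟩)
  have hdom : ∀ y, edist (Φ y x₀) (Φ y₀ x₀) ≤ 1 → ∀ x, edist (Φ y x) (Φ y₀ x) ^ p ≤ H x := by
    intro y hy x
    calc edist (Φ y x) (Φ y₀ x) ^ p ≤ (edist (Φ y x₀) (Φ y₀ x₀) + 2 * edist x x₀) ^ p := by
          gcongr; exact edist_apply_le_edist_apply_add (hΦ y) (hΦ y₀) x x₀
      _ ≤ K * (edist (Φ y x₀) (Φ y₀ x₀) ^ p + (2 * edist x x₀) ^ p) :=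
          ENNReal.rpow_add_le_mul_rpow_add_rpow' _ _ hp.le
      _ ≤ K * (1 + 2 ^ p * edist x x₀ ^ p) := by
          rw [ENNReal.mul_rpow_of_nonneg _ _ hp.le]
          gcongr
          exact ENNReal.rpow_le_one hy hp.le
  refine ENNReal.tendsto_nhds_zero.2 fun ε hε => ?_
  obtain ⟨c, hc₀, hc⟩ := ENNReal.exists_nnreal_pos_mul_lt (measure_ne_top μ univ)
    (ENNReal.half_pos hε.ne').ne'
  set s := (c : ℝ≥0∞) ^ (1 / p)
  have hs : 0 < s := ENNReal.rpow_pos (by exact_mod_cast hc₀) coe_ne_top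
  have hsp : s ^ p = c := by
    rw [← ENNReal.rpow_mul, one_div_mul_cancel hp.ne', ENNReal.rpow_one]
  obtain ⟨T, hT, hTε⟩ := exists_finite_measure_compl_biUnion_eball_lt (μ.withDensity H)
    (r := s / 3) (ENNReal.div_pos hs.ne' ofNat_ne_top) (ENNReal.half_pos hε.ne')
  set S := ⋃ t ∈ T, eball t (s / 3)
  have hS : MeasurableSet S := hT.measurableSet_biUnion fun t _ => isOpen_eball.measurableSet
  filter_upwards [eventually_forall_biUnion_eball_edist_le hΦ hcont hT hs,
    EMetric.tendsto_nhds.1 (hcont x₀) 1 one_pos] with y hyS hy₀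
  calc ∫⁻ x, edist (Φ y x) (Φ y₀ x) ^ p ∂μ
      = ∫⁻ x in S, edist (Φ y x) (Φ y₀ x) ^ p ∂μ + ∫⁻ x in Sᶜ, edist (Φ y x) (Φ y₀ x) ^ p ∂μ :=
        (lintegral_add_compl _ hS).symm
    _ ≤ ∫⁻ _ in S, (c : ℝ≥0∞) ∂μ + ∫⁻ x in Sᶜ, H x ∂μ := by
        refine add_le_add (setLIntegral_mono measurable_const fun x hx => ?_)
          (setLIntegral_mono hH fun x _ => hdom y hy₀.le x)
        rw [← hsp]
        exact ENNReal.rpow_le_rpow (hyS x hx) hp.le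
    _ ≤ c * μ univ + μ.withDensity H Sᶜ := by
        rw [setLIntegral_const, withDensity_apply _ hS.compl]
        gcongr
        exact subset_univ _
    _ ≤ ε / 2 + ε / 2 := add_le_add hc.le hTε.le
    _ = ε := ENNReal.add_halves ε

end LipschitzFamily

theorem wasserstein_distance_continuous_in_group_general {X : Type*} [MetricSpace X]
    [TopologicalSpace.SeparableSpace X] [MeasurableSpace X] [BorelSpace X]
    (G : Type*) [Group G] [TopologicalSpace G]
    [MulAction G X] [ContinuousSMul G X]
    (hiso : ∀ g : G, Isometry (fun x : X => g • x))
    (p : ℝ) (hp : 1 ≤ p)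
    (μ ν : Measure X)
    (hμ : IsProbabilityMeasure μ) (hμp : HasFinitePMoment p μ) :
    Continuous (fun g : G => Wp p (μ.map (fun x : X => g • x)) ν) := by
  have : SecondCountableTopology X := UniformSpace.secondCountable_of_separable X
  have hp₀ : 0 < p := zero_lt_one.trans_le hp
  refine continuous_iff_continuousAt.2 fun h => ENNReal.continuousAt_of_le_add
    (C := fun g => (∫⁻ x, edist (g • x) (h • x) ^ p ∂μ) ^ (1 / p)) ?_
    (fun g => Wp_map_smul_le_add hp μ ν g h) (fun g => ?_)
  · have hcost := tendsto_lintegral_edist_rpow_nhds_zero (fun g => (hiso g).lipschitz)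
      (y₀ := h) (fun x => (continuous_id.smul continuous_const).continuousAt) hp₀ hμp
    have hroot := ((ENNReal.continuous_rpow_const (y := 1 / p)).tendsto 0).comp hcost
    rwa [ENNReal.zero_rpow_of_pos (one_div_pos.2 hp₀)] at hroot
  · simpa only [edist_comm] using Wp_map_smul_le_add hp μ ν h g

/-- Let `X` be a Polish metric space, `p ≥ 1`, and `G` a topological group acting
continuously on `X` by isometries. Then for every `μ, ν ∈ P_p(X)` the map
`g ↦ W_p(g_#μ, ν)` is continuous on `G`. -/
theorem wasserstein_distance_continuous_in_group {X : Type*} [MetricSpace X] [CompleteSpace X]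
    [TopologicalSpace.SeparableSpace X] [MeasurableSpace X] [BorelSpace X]
    (G : Type*) [Group G] [TopologicalSpace G] [IsTopologicalGroup G]
    [MulAction G X] [ContinuousSMul G X]
    (hiso : ∀ g : G, Isometry (fun x : X => g • x))
    (p : ℝ) (hp : 1 ≤ p)
    (μ ν : Measure X)
    (hμ : IsProbabilityMeasure μ) (hμp : HasFinitePMoment p μ)
    (hν : IsProbabilityMeasure ν) (hνp : HasFinitePMoment p ν) :
    Continuous (fun g : G => Wp p (μ.map (fun x : X => g • x)) ν) :=
  wasserstein_distance_continuous_in_group_general G hiso p hp μ ν hμ hμp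

end
end

section
/- Let (X,d) be a proper Polish metric space, p ≥ 1, and let G be a topological group acting on X by isometries such that the action is continuous and proper. Then the shape distance D_p(μ,ν) := inf_{g ∈ G} W_p(g_#μ, ν) is a metric on the quotient of P_p(X) by the relation μ ∼ ν :⇔ ∃ g ∈ G, g_#μ = ν; in particular, if D_p(μ,ν) = 0 then there exists g ∈ G with g_#μ = ν. -/
open MeasureTheory ENNReal Set

noncomputable section

/-- Shape distance `D_p(μ,ν) := inf_{g ∈ G} W_p(g_#μ, ν)` for a group action. -/
def DpAct {X : Type*} (G : Type*) [Group G] [MulAction G X] [MeasurableSpace X]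
    [MetricSpace X] (p : ℝ) (μ ν : Measure X) : ℝ≥0∞ :=
  ⨅ g : G, Wp p (μ.map (fun x : X => g • x)) ν

/-!
Every claim except the last comes from properties of `W_p` itself: isometries preserve `W_p`,
so `W_p(g_#μ, h_#ν) = W_p((h⁻¹g)_#μ, ν)` and the infimum over `G` can be reindexed; the
triangle inequality for `W_p` follows by gluing two couplings along their common marginal
(disintegration) and applying Minkowski's inequality.

If `D_p(μ, ν) = 0`, consider the filter of those `g` with `W_p(g_#μ, ν) → 0`. Since most of the
mass of `μ` and `ν` sits on compact sets `K`, `K'`, such `g` must eventually move a point of `K`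
close to `K'`, and properness of the action confines them to a compact subset of `G`; let `a`
be a cluster point. For a bounded Lipschitz `f`, `∫ f d(g_#μ) → ∫ f dν` by the bound
`∫ f dμ ≤ ∫ f dν + Lip(f) W_p(μ, ν)`, while `g ↦ ∫ f(g • x) dμ(x)` is continuous by tightness
of `μ`; hence `∫ f d(a_#μ) = ∫ f dν` for all such `f`, and `a_#μ = ν`.
-/

open Filter Topology
open scoped NNReal

theorem NNReal.coe_le_coe_add_edist (a b : ℝ≥0) : (a : ℝ≥0∞) ≤ b + edist a b := by
  rw [edist_dist, NNReal.dist_eq, ← ENNReal.ofReal_coe_nnreal, ← ENNReal.ofReal_coe_nnreal (p := b),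
    ← ENNReal.ofReal_add (NNReal.coe_nonneg b) (abs_nonneg _)]
  exact ENNReal.ofReal_le_ofReal (by linarith [le_abs_self ((a : ℝ) - b)])

section Couplings

variable {Y : Type*} [MeasurableSpace Y] {μ ν : Measure Y} {π : Measure (Y × Y)}

theorem prod_mem_Adm [IsProbabilityMeasure μ] [IsProbabilityMeasure ν] : μ.prod ν ∈ Adm μ ν :=
  ⟨inferInstance, by simp, by simp⟩

theorem map_prodMap_mem_Adm_s9 (hπ : π ∈ Adm μ ν) {g : Y → Y} (hg : Measurable g) :
    π.map (Prod.map g g) ∈ Adm (μ.map g) (ν.map g) := by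
  obtain ⟨hprob, rfl, rfl⟩ := hπ
  refine ⟨Measure.isProbabilityMeasure_map (hg.prodMap hg).aemeasurable, ?_, ?_⟩
  · rw [Measure.map_map measurable_fst (hg.prodMap hg), Measure.map_map hg measurable_fst]; rfl
  · rw [Measure.map_map measurable_snd (hg.prodMap hg), Measure.map_map hg measurable_snd]; rfl

theorem map_swap_mem_Adm (hπ : π ∈ Adm μ ν) : π.map Prod.swap ∈ Adm ν μ := by
  obtain ⟨hprob, rfl, rfl⟩ := hπ
  refine ⟨Measure.isProbabilityMeasure_map measurable_swap.aemeasurable, ?_, ?_⟩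
  · rw [Measure.map_map measurable_fst measurable_swap]; rfl
  · rw [Measure.map_map measurable_snd measurable_swap]; rfl

theorem map_diag_mem_Adm [IsProbabilityMeasure μ] : μ.map (fun x : Y => (x, x)) ∈ Adm μ μ := by
  have hdiag : Measurable (fun x : Y => (x, x)) := measurable_id.prodMk measurable_id
  refine ⟨Measure.isProbabilityMeasure_map hdiag.aemeasurable, ?_, ?_⟩
  · rw [Measure.map_map measurable_fst hdiag]; exact Measure.map_id
  · rw [Measure.map_map measurable_snd hdiag]; exact Measure.map_id

end Couplings

def transportCost {X : Type*} [MeasurableSpace X] [PseudoEMetricSpace X] (p : ℝ)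
    (π : Measure (X × X)) : ℝ≥0∞ :=
  eLpNorm (fun z : X × X => edist z.1 z.2) (ENNReal.ofReal p) π

section Wasserstein

variable {X : Type*} [PseudoEMetricSpace X] [MeasurableSpace X] {p : ℝ} {μ ν : Measure X}
  {π : Measure (X × X)}

theorem Wp_eq_iInf_transportCost (hp : 0 < p) (μ ν : Measure X) :
    Wp p μ ν = ⨅ π ∈ Adm μ ν, transportCost p π := by
  have hp' : 0 < 1 / p := by positivity
  -- `x ↦ x ^ (1 / p)` is an order isomorphism, hence commutes with infima
  change orderIsoRpow (1 / p) hp' _ = _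
  simp only [OrderIso.map_iInf, orderIsoRpow_apply, transportCost,
    eLpNorm_eq_lintegral_rpow_enorm_toReal (ENNReal.ofReal_pos.2 hp).ne' ofReal_ne_top,
    toReal_ofReal hp.le, enorm_eq_self]

theorem Wp_le_transportCost (hp : 0 < p) (hπ : π ∈ Adm μ ν) : Wp p μ ν ≤ transportCost p π :=
  (Wp_eq_iInf_transportCost hp μ ν).trans_le (iInf₂_le π hπ)

variable [SecondCountableTopology X] [BorelSpace X]

theorem transportCost_map_prodMap {g : X → X} (hg : Isometry g) :
    transportCost p (π.map (Prod.map g g)) = transportCost p π := by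
  have hm : Measurable (Prod.map g g) := hg.continuous.measurable.prodMap hg.continuous.measurable
  rw [transportCost, eLpNorm_map_measure continuous_edist.aestronglyMeasurable hm.aemeasurable]
  simp only [Function.comp_def, Prod.map_fst, Prod.map_snd, hg.edist_eq]
  rfl

theorem transportCost_map_swap : transportCost p (π.map Prod.swap) = transportCost p π := by
  rw [transportCost, eLpNorm_map_measure continuous_edist.aestronglyMeasurable
    measurable_swap.aemeasurable]
  simp only [Function.comp_def, Prod.fst_swap, Prod.snd_swap, edist_comm]
  rfl

theorem transportCost_map_diag : transportCost p (μ.map fun x : X => (x, x)) = 0 := by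
  have hdiag : Measurable fun x : X => (x, x) := measurable_id.prodMk measurable_id
  rw [transportCost, eLpNorm_map_measure continuous_edist.aestronglyMeasurable hdiag.aemeasurable]
  simp [Function.comp_def]

theorem lintegral_edist_le_transportCost (hp : 1 ≤ p) [IsProbabilityMeasure π] :
    ∫⁻ z, edist z.1 z.2 ∂π ≤ transportCost p π := by
  have h := eLpNorm_le_eLpNorm_of_exponent_le (μ := π) (ENNReal.one_le_ofReal.2 hp)
    continuous_edist.aestronglyMeasurable (f := fun z : X × X => edist z.1 z.2)
  rwa [eLpNorm_one_eq_lintegral_enorm] at h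

theorem Wp_map_le (hp : 0 < p) {g : X → X} (hg : Isometry g) :
    Wp p (μ.map g) (ν.map g) ≤ Wp p μ ν := by
  rw [Wp_eq_iInf_transportCost hp μ ν]
  refine le_iInf₂ fun π hπ => ?_
  rw [← transportCost_map_prodMap hg]
  exact Wp_le_transportCost hp (map_prodMap_mem_Adm_s9 hπ hg.continuous.measurable)

theorem Wp_comm (hp : 0 < p) (μ ν : Measure X) : Wp p μ ν = Wp p ν μ := by
  suffices h : ∀ μ ν : Measure X, Wp p ν μ ≤ Wp p μ ν from le_antisymm (h ν μ) (h μ ν)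
  intro μ ν
  rw [Wp_eq_iInf_transportCost hp μ ν]
  refine le_iInf₂ fun π hπ => ?_
  rw [← transportCost_map_swap]
  exact Wp_le_transportCost hp (map_swap_mem_Adm hπ)

theorem Wp_self (hp : 0 < p) [IsProbabilityMeasure μ] : Wp p μ μ = 0 :=
  nonpos_iff_eq_zero.1 <| transportCost_map_diag (μ := μ) (p := p) ▸
    Wp_le_transportCost hp map_diag_mem_Adm

end Wasserstein

section Gluing

open ProbabilityTheory

theorem exists_gluing {Y : Type*} [MeasurableSpace Y] [StandardBorelSpace Y]
    {π₁ π₂ : Measure (Y × Y)} [IsProbabilityMeasure π₁] [IsProbabilityMeasure π₂]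
    (h : π₁.snd = π₂.fst) :
    ∃ τ : Measure (Y × Y × Y), IsProbabilityMeasure τ ∧
      τ.map (fun q => (q.2.1, q.1)) = π₁ ∧ τ.map (fun q => (q.1, q.2.2)) = π₂ := by
  have : Nonempty Y := nonempty_of_isProbabilityMeasure π₂.fst
  set ρ := π₁.map Prod.swap
  have hρ : ρ.fst = π₂.fst := by rw [Measure.fst_map_swap, h]
  -- glue the disintegrations of `ρ` and `π₂` along their common first marginal
  refine ⟨π₂.fst ⊗ₘ (ρ.condKernel ×ₖ π₂.condKernel), inferInstance, ?_, ?_⟩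
  · have h₁ : (π₂.fst ⊗ₘ (ρ.condKernel ×ₖ π₂.condKernel)).map (Prod.map id Prod.fst) = ρ := by
      rw [← Measure.compProd_map measurable_fst, ← Kernel.fst_eq, Kernel.fst_prod, ← hρ,
        Measure.disintegrate]
    rw [show (fun q : Y × Y × Y => (q.2.1, q.1)) = Prod.swap ∘ Prod.map id Prod.fst from rfl,
      ← Measure.map_map measurable_swap (measurable_id.prodMap measurable_fst), h₁,
      Measure.map_map measurable_swap measurable_swap, Prod.swap_swap_eq, Measure.map_id]
  · rw [show (fun q : Y × Y × Y => (q.1, q.2.2)) = Prod.map id Prod.snd from rfl,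
      ← Measure.compProd_map measurable_snd, ← Kernel.snd_eq, Kernel.snd_prod,
      Measure.disintegrate]

end Gluing

section Triangle

variable {X : Type*} [PseudoEMetricSpace X] [SecondCountableTopology X] [MeasurableSpace X]
  [BorelSpace X] [StandardBorelSpace X] {p : ℝ} {μ ν σ : Measure X}

theorem exists_mem_Adm_transportCost_le_add (hp : 1 ≤ p) {π₁ π₂ : Measure (X × X)}
    (h₁ : π₁ ∈ Adm μ σ) (h₂ : π₂ ∈ Adm σ ν) :
    ∃ π ∈ Adm μ ν, transportCost p π ≤ transportCost p π₁ + transportCost p π₂ := by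
  obtain ⟨hπ₁, hμ, hσ₁⟩ := h₁
  obtain ⟨hπ₂, hσ₂, hν⟩ := h₂
  obtain ⟨τ, hτ, hτ₁, hτ₂⟩ := exists_gluing (hσ₁.trans hσ₂.symm)
  have hm₁ : Measurable fun q : X × X × X => (q.2.1, q.1) := by fun_prop
  have hm₂ : Measurable fun q : X × X × X => (q.1, q.2.2) := by fun_prop
  have hcost {f : X × X × X → X × X} (hf : Measurable f) :
      transportCost p (τ.map f) = eLpNorm (fun q => edist (f q).1 (f q).2) (.ofReal p) τ :=
    eLpNorm_map_measure continuous_edist.aestronglyMeasurable hf.aemeasurable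
  refine ⟨τ.map Prod.snd,
    ⟨Measure.isProbabilityMeasure_map measurable_snd.aemeasurable, ?_, ?_⟩, ?_⟩
  · rw [← hμ, ← hτ₁, Measure.map_map measurable_fst measurable_snd,
      Measure.map_map measurable_fst hm₁]; rfl
  · rw [← hν, ← hτ₂, Measure.map_map measurable_snd measurable_snd,
      Measure.map_map measurable_snd hm₂]; rfl
  · rw [hcost measurable_snd, ← hτ₁, ← hτ₂, hcost hm₁, hcost hm₂]
    calc eLpNorm (fun q : X × X × X => edist q.2.1 q.2.2) (.ofReal p) τ
        ≤ eLpNorm ((fun q : X × X × X => edist q.2.1 q.1) + fun q => edist q.1 q.2.2)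
            (.ofReal p) τ :=
          eLpNorm_mono_enorm fun q => by
            simpa only [enorm_eq_self, Pi.add_apply] using edist_triangle _ _ _
      _ ≤ _ := eLpNorm_add_le (by fun_prop) (by fun_prop) (ENNReal.one_le_ofReal.2 hp)

theorem Wp_triangle (hp : 1 ≤ p) (μ ν σ : Measure X) : Wp p μ ν ≤ Wp p μ σ + Wp p σ ν := by
  have hp₀ : 0 < p := zero_lt_one.trans_le hp
  simp only [Wp_eq_iInf_transportCost hp₀, ENNReal.iInf_add, ENNReal.add_iInf]
  refine le_iInf₂ fun π₂ h₂ => le_iInf₂ fun π₁ h₁ => ?_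
  obtain ⟨π, hπ, hle⟩ := exists_mem_Adm_transportCost_le_add hp h₁ h₂
  exact (iInf₂_le π hπ).trans hle

end Triangle

section ShapeDistance

variable {X : Type*} [MeasurableSpace X] {G : Type*} [Group G] [MulAction G X]

theorem map_map_smul [MeasurableConstSMul G X] (μ : Measure X) (g h : G) :
    (μ.map fun x : X => g • x).map (fun x : X => h • x) = μ.map fun x : X => (h * g) • x := by
  rw [Measure.map_map (measurable_const_smul h) (measurable_const_smul g)]
  simp only [Function.comp_def, mul_smul]

theorem map_one_smul (μ : Measure X) : μ.map (fun x : X => (1 : G) • x) = μ := by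
  simp only [one_smul, Measure.map_id']

variable [MetricSpace X] {p : ℝ} {μ ν σ : Measure X}

theorem DpAct_self (hp : 0 < p) [SecondCountableTopology X] [BorelSpace X]
    [IsProbabilityMeasure μ] : DpAct G p μ μ = 0 :=
  nonpos_iff_eq_zero.1 <| (iInf_le _ 1).trans_eq <| by rw [map_one_smul, Wp_self hp]

variable [MeasurableConstSMul G X]

theorem DpAct_map_smul_left (g : G) : DpAct G p (μ.map fun x : X => g • x) ν = DpAct G p μ ν := by
  simp only [DpAct, map_map_smul]
  exact (Equiv.mulRight g).iInf_comp (g := fun h : G => Wp p (μ.map fun x : X => h • x) ν)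

variable [SecondCountableTopology X] [BorelSpace X]

theorem Wp_map_smul (hiso : ∀ g : G, Isometry fun x : X => g • x) (hp : 0 < p)
    (μ ν : Measure X) (g : G) :
    Wp p (μ.map fun x : X => g • x) (ν.map fun x : X => g • x) = Wp p μ ν := by
  refine le_antisymm (Wp_map_le hp (hiso g)) ?_
  simpa only [map_map_smul, inv_mul_cancel, map_one_smul] using
    Wp_map_le (μ := μ.map fun x : X => g • x) (ν := ν.map fun x : X => g • x) hp (hiso g⁻¹)

theorem Wp_map_smul_left (hiso : ∀ g : G, Isometry fun x : X => g • x) (hp : 0 < p) (g : G) :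
    Wp p (μ.map fun x : X => g • x) ν = Wp p μ (ν.map fun x : X => g⁻¹ • x) := by
  rw [← Wp_map_smul hiso hp _ _ g⁻¹, map_map_smul, inv_mul_cancel, map_one_smul]

theorem DpAct_eq_iInf_map_right (hiso : ∀ g : G, Isometry fun x : X => g • x) (hp : 0 < p) :
    DpAct G p μ ν = ⨅ g : G, Wp p μ (ν.map fun x : X => g • x) := by
  simp only [DpAct, Wp_map_smul_left hiso hp]
  exact (Equiv.inv G).iInf_comp (g := fun g : G => Wp p μ (ν.map fun x : X => g • x))

theorem DpAct_map_smul_right (hiso : ∀ g : G, Isometry fun x : X => g • x) (hp : 0 < p) (g : G) :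
    DpAct G p μ (ν.map fun x : X => g • x) = DpAct G p μ ν := by
  simp only [DpAct_eq_iInf_map_right hiso hp, map_map_smul]
  exact (Equiv.mulRight g).iInf_comp (g := fun h : G => Wp p μ (ν.map fun x : X => h • x))

theorem DpAct_comm (hiso : ∀ g : G, Isometry fun x : X => g • x) (hp : 0 < p) :
    DpAct G p μ ν = DpAct G p ν μ := by
  rw [DpAct_eq_iInf_map_right hiso hp, DpAct]
  simp only [Wp_comm hp μ]

theorem DpAct_triangle [StandardBorelSpace X] (hiso : ∀ g : G, Isometry fun x : X => g • x)
    (hp : 1 ≤ p) : DpAct G p μ ν ≤ DpAct G p μ σ + DpAct G p σ ν := by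
  simp only [DpAct, ENNReal.iInf_add, ENNReal.add_iInf]
  refine le_iInf₂ fun h g => ?_
  calc DpAct G p μ ν ≤ Wp p (μ.map fun x : X => (h * g) • x) ν := iInf_le _ _
    _ ≤ Wp p (μ.map fun x : X => (h * g) • x) (σ.map fun x : X => h • x) +
        Wp p (σ.map fun x : X => h • x) ν := Wp_triangle hp _ _ _
    _ = Wp p (μ.map fun x : X => g • x) σ + Wp p (σ.map fun x : X => h • x) ν := by
      rw [← map_map_smul, Wp_map_smul hiso (zero_lt_one.trans_le hp)]

end ShapeDistance

section TestFunctions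

variable {X : Type*} [PseudoEMetricSpace X] [SecondCountableTopology X] [MeasurableSpace X]
  [BorelSpace X] {p : ℝ} {μ ν : Measure X} {f : X → ℝ≥0} {K : ℝ≥0}

theorem lintegral_le_lintegral_add_mul_transportCost (hp : 1 ≤ p) (hf : LipschitzWith K f)
    {π : Measure (X × X)} (hπ : π ∈ Adm μ ν) :
    ∫⁻ x, f x ∂μ ≤ ∫⁻ x, f x ∂ν + K * transportCost p π := by
  obtain ⟨hπ, rfl, rfl⟩ := hπ
  have hfm : Measurable fun x => (f x : ℝ≥0∞) := hf.continuous.measurable.coe_nnreal_ennreal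
  rw [lintegral_map hfm measurable_fst, lintegral_map hfm measurable_snd]
  calc ∫⁻ z, (f z.1 : ℝ≥0∞) ∂π ≤ ∫⁻ z, (f z.2 + K * edist z.1 z.2) ∂π :=
        lintegral_mono fun z => (NNReal.coe_le_coe_add_edist _ _).trans (by gcongr; exact hf _ _)
    _ = ∫⁻ z, (f z.2 : ℝ≥0∞) ∂π + K * ∫⁻ z, edist z.1 z.2 ∂π := by
        rw [lintegral_add_right _ (continuous_edist.measurable.const_mul _),
          lintegral_const_mul _ continuous_edist.measurable]
    _ ≤ _ := by gcongr; exact lintegral_edist_le_transportCost hp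

theorem lintegral_le_lintegral_add_mul_Wp (hp : 1 ≤ p) (hf : LipschitzWith K f)
    [IsProbabilityMeasure μ] [IsProbabilityMeasure ν] :
    ∫⁻ x, f x ∂μ ≤ ∫⁻ x, f x ∂ν + K * Wp p μ ν := by
  have : Nonempty (Adm μ ν) := ⟨⟨_, prod_mem_Adm⟩⟩
  rw [Wp_eq_iInf_transportCost (zero_lt_one.trans_le hp), iInf_subtype',
    ENNReal.mul_iInf (by simp), ENNReal.add_iInf]
  exact le_iInf fun π => lintegral_le_lintegral_add_mul_transportCost hp hf π.2

theorem tendsto_lintegral_of_tendsto_Wp {ι : Type*} {l : Filter ι} {μs : ι → Measure X}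
    (hμs : ∀ i, IsProbabilityMeasure (μs i)) [IsProbabilityMeasure ν] (hp : 1 ≤ p)
    (hf : LipschitzWith K f) (hfν : ∫⁻ x, f x ∂ν ≠ ∞)
    (h : Tendsto (fun i => Wp p (μs i) ν) l (𝓝 0)) :
    Tendsto (fun i => ∫⁻ x, f x ∂(μs i)) l (𝓝 (∫⁻ x, f x ∂ν)) := by
  have hK : Tendsto (fun i => (K : ℝ≥0∞) * Wp p (μs i) ν) l (𝓝 0) := by
    simpa using ENNReal.Tendsto.const_mul h (Or.inr coe_ne_top)
  refine tendsto_of_tendsto_of_tendsto_of_le_of_le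
    (by simpa using ENNReal.Tendsto.sub tendsto_const_nhds hK (Or.inl hfν))
    (by simpa using tendsto_const_nhds.add hK) (fun i => ?_) (fun i => ?_)
  · rw [Wp_comm (zero_lt_one.trans_le hp), tsub_le_iff_right]
    exact lintegral_le_lintegral_add_mul_Wp hp hf
  · exact lintegral_le_lintegral_add_mul_Wp hp hf

end TestFunctions

theorem ext_of_forall_lintegral_eq_of_lipschitzWith {X : Type*} [PseudoEMetricSpace X]
    [MeasurableSpace X] [BorelSpace X] {μ ν : Measure X} [IsFiniteMeasure μ] [IsFiniteMeasure ν]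
    (h : ∀ (f : X → ℝ≥0) (K : ℝ≥0), LipschitzWith K f → (∀ x, f x ≤ 1) →
      ∫⁻ x, f x ∂μ = ∫⁻ x, f x ∂ν) :
    μ = ν := by
  have hδ (n : ℕ) : (0 : ℝ) < 1 / (n + 1) := by positivity
  have hclosed {F : Set X} (hF : IsClosed F) : μ F = ν F := by
    refine tendsto_nhds_unique ?_ (tendsto_lintegral_thickenedIndicator_of_isClosed ν hF hδ
      tendsto_one_div_add_atTop_nhds_zero_nat)
    simp only [← h _ _ (lipschitzWith_thickenedIndicator (hδ _) F)
      (thickenedIndicator_le_one (hδ _) F)]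
    exact tendsto_lintegral_thickenedIndicator_of_isClosed μ hF hδ
      tendsto_one_div_add_atTop_nhds_zero_nat
  exact ext_of_generate_finite _ (BorelSpace.measurable_eq.trans borel_eq_generateFrom_isClosed)
    isPiSystem_isClosed (fun _ => hclosed) (hclosed isClosed_univ)

theorem lintegral_le_lintegral_add_of_edist_lt_on {X : Type*} [MeasurableSpace X]
    {μ : Measure X} [IsProbabilityMeasure μ] {u v : X → ℝ≥0} {B : ℝ≥0} (hu : ∀ x, u x ≤ B)
    {C : Set X} (hC : MeasurableSet C) {η : ℝ≥0∞} (huv : ∀ x ∈ C, edist (u x) (v x) < η) :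
    ∫⁻ x, u x ∂μ ≤ ∫⁻ x, v x ∂μ + η + B * μ Cᶜ := by
  calc ∫⁻ x, (u x : ℝ≥0∞) ∂μ
      ≤ ∫⁻ x, ((v x + η : ℝ≥0∞) + Cᶜ.indicator (fun _ => (B : ℝ≥0∞)) x) ∂μ := by
        refine lintegral_mono fun x => ?_
        by_cases hx : x ∈ C
        · calc (u x : ℝ≥0∞) ≤ v x + edist (u x) (v x) := NNReal.coe_le_coe_add_edist _ _
            _ ≤ _ := le_add_right (by gcongr; exact (huv x hx).le)
        · simpa [hx] using le_add_left (coe_le_coe.2 (hu x))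
    _ = ∫⁻ x, v x ∂μ + η + B * μ Cᶜ := by
        rw [lintegral_add_right _ (measurable_const.indicator hC.compl),
          lintegral_add_right _ measurable_const, lintegral_const, measure_univ, mul_one,
          lintegral_indicator_const hC.compl]

theorem continuous_lintegral_of_isTightMeasureSet {G X : Type*} [TopologicalSpace G]
    [TopologicalSpace X] [T2Space X] [MeasurableSpace X] [OpensMeasurableSpace X] {μ : Measure X}
    [IsProbabilityMeasure μ] (hμ : IsTightMeasureSet {μ}) {F : G → X → ℝ≥0}
    (hF : Continuous (Function.uncurry F)) {B : ℝ≥0} (hB : ∀ g x, F g x ≤ B) :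
    Continuous fun g => ∫⁻ x, F g x ∂μ := by
  refine continuous_iff_continuousAt.2 fun g₀ => ENNReal.tendsto_nhds_of_Icc fun ε hε => ?_
  have hε₂ : (0 : ℝ≥0∞) < ε / 2 := ENNReal.half_pos (by exact_mod_cast hε.ne')
  obtain ⟨C, hC, hμC⟩ := isTightMeasureSet_iff_exists_isCompact_measure_compl_le.1 hμ (ε / 2 / B)
    (ENNReal.div_pos hε₂.ne' coe_ne_top)
  have hsmall : ε / 2 + B * μ Cᶜ ≤ ε := by
    calc ε / 2 + B * μ Cᶜ ≤ ε / 2 + B * (ε / 2 / B) := by gcongr; exact hμC μ rfl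
      _ ≤ ε / 2 + ε / 2 := by gcongr; exact ENNReal.mul_div_le
      _ = ε := ENNReal.add_halves _
  obtain ⟨v, hv, hvC⟩ := hC.mem_uniformity_of_prod hF.continuousOn (mem_univ g₀)
    (edist_mem_uniformity hε₂)
  rw [nhdsWithin_univ] at hv
  filter_upwards [hv] with g hg
  constructor
  · refine tsub_le_iff_right.2 <| (lintegral_le_lintegral_add_of_edist_lt_on (hB g₀)
      hC.measurableSet fun x hx => ?_).trans (by rw [add_assoc]; gcongr)
    rw [edist_comm]; exact hvC g hg x hx
  · exact (lintegral_le_lintegral_add_of_edist_lt_on (hB g) hC.measurableSet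
      (hvC g hg)).trans (by rw [add_assoc]; gcongr)

theorem isCompact_setOf_exists_smul_mem {G X : Type*} [TopologicalSpace G] [TopologicalSpace X]
    [SMul G X] (hproper : IsProperMap fun q : G × X => (q.1 • q.2, q.2)) {K K' : Set X}
    (hK : IsCompact K) (hK' : IsCompact K') : IsCompact {g : G | ∃ x ∈ K, g • x ∈ K'} := by
  convert (hproper.isCompact_preimage (hK'.prod hK)).image continuous_fst using 1
  ext g
  simp [and_comm]

theorem lintegral_le_measure_compl_of_eq_zero {X : Type*} [MeasurableSpace X] {μ : Measure X}
    {u : X → ℝ≥0} (hu : ∀ x, u x ≤ 1) {K : Set X} (hK : MeasurableSet K)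
    (hu₀ : ∀ x ∈ K, u x = 0) : ∫⁻ x, u x ∂μ ≤ μ Kᶜ := by
  rw [← lintegral_indicator_one hK.compl]
  refine lintegral_mono fun x => ?_
  by_cases hx : x ∈ K
  · simp [hu₀ x hx]
  · simpa [hx] using hu x

section ZeroDistance

variable {X : Type*} [MetricSpace X] [MeasurableSpace X] [BorelSpace X] {G : Type*}
  [TopologicalSpace G] [SMul G X] [ContinuousSMul G X] {p : ℝ} {μ ν : Measure X}
  [IsProbabilityMeasure μ] [IsProbabilityMeasure ν]

theorem exists_isCompact_eventually_mem_of_tendsto_Wp [ProperSpace X]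
    (hproper : IsProperMap fun q : G × X => (q.1 • q.2, q.2)) (hp : 1 ≤ p) {l : Filter G}
    (h : Tendsto (fun g : G => Wp p (μ.map fun x : X => g • x) ν) l (𝓝 0)) :
    ∃ L : Set G, IsCompact L ∧ ∀ᶠ g in l, g ∈ L := by
  obtain ⟨K', hK', hνK'⟩ := isTightMeasureSet_iff_exists_isCompact_measure_compl_le.1
    (isTightMeasureSet_singleton (μ := ν)) (1 / 2) (by norm_num)
  have hνK'₀ : ν K' ≠ 0 := fun h₀ => by
    have := hνK' ν rfl
    rw [prob_compl_eq_one_sub hK'.measurableSet, h₀, tsub_zero] at this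
    norm_num at this
  obtain ⟨K, hK, hμK⟩ := isTightMeasureSet_iff_exists_isCompact_measure_compl_le.1
    (isTightMeasureSet_singleton (μ := μ)) (ν K' / 2) (ENNReal.half_pos hνK'₀)
  -- `f` is `1` on `K'` and `0` off `cthickening 1 K'`, so `∫ f d(g_#μ) > μ Kᶜ` forces
  -- `g • K` to meet `cthickening 1 K'`
  set f := thickenedIndicator one_pos K'
  have hlim := tendsto_lintegral_of_tendsto_Wp (fun g => Measure.isProbabilityMeasure_map
    (measurable_const_smul g).aemeasurable) hp (lipschitzWith_thickenedIndicator one_pos K')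
    (BoundedContinuousFunction.lintegral_lt_top_of_nnreal ν f).ne h
  have hlt : μ Kᶜ < ∫⁻ x, f x ∂ν :=
    (hμK μ rfl).trans_lt <| (ENNReal.half_lt_self hνK'₀ (measure_ne_top ν _)).trans_le <|
      measure_le_lintegral_thickenedIndicator ν hK'.measurableSet one_pos
  refine ⟨{g | ∃ x ∈ K, g • x ∈ Metric.cthickening 1 K'},
    isCompact_setOf_exists_smul_mem hproper hK hK'.cthickening, ?_⟩
  filter_upwards [hlim.eventually (lt_mem_nhds hlt)] with g hg
  by_contra hgL
  refine hg.not_ge ?_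
  rw [lintegral_map f.continuous.measurable.coe_nnreal_ennreal (measurable_const_smul g)]
  refine lintegral_le_measure_compl_of_eq_zero (thickenedIndicator_le_one one_pos K' <| g • ·)
    hK.measurableSet fun x hx => thickenedIndicator_zero one_pos K' fun hgx =>
      hgL ⟨x, hx, Metric.thickening_subset_cthickening 1 K' hgx⟩

theorem map_smul_eq_of_clusterPt [CompleteSpace X] [SecondCountableTopology X] (hp : 1 ≤ p)
    {l : Filter G} (h : Tendsto (fun g : G => Wp p (μ.map fun x : X => g • x) ν) l (𝓝 0))
    {a : G} (ha : ClusterPt a l) : μ.map (fun x : X => a • x) = ν := by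
  have := Measure.isProbabilityMeasure_map (μ := μ) (measurable_const_smul a).aemeasurable
  refine ext_of_forall_lintegral_eq_of_lipschitzWith fun f K hf hf₁ => ?_
  have hfm : Measurable fun x => (f x : ℝ≥0∞) := hf.continuous.measurable.coe_nnreal_ennreal
  have hcont : Continuous fun g : G => ∫⁻ x, f (g • x) ∂μ :=
    continuous_lintegral_of_isTightMeasureSet isTightMeasureSet_singleton
      (F := fun g x => f (g • x)) (hf.continuous.comp continuous_smul) fun _ _ => hf₁ _
  have hfν : ∫⁻ x, f x ∂ν ≠ ∞ :=
    ((lintegral_mono fun x => coe_le_one_iff.2 (hf₁ x)).trans_lt (by simp)).ne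
  have hlim : Tendsto (fun g : G => ∫⁻ x, f (g • x) ∂μ) l (𝓝 (∫⁻ x, f x ∂ν)) :=
    (tendsto_lintegral_of_tendsto_Wp (fun g => Measure.isProbabilityMeasure_map
      (measurable_const_smul g).aemeasurable) hp hf hfν h).congr
      fun g => lintegral_map (f := fun x => (f x : ℝ≥0∞)) hfm (measurable_const_smul g)
  rw [lintegral_map hfm (measurable_const_smul a)]
  exact eq_of_nhds_neBot (ha.map hcont.continuousAt hlim)

end ZeroDistance

theorem exists_map_smul_eq_of_DpAct_eq_zero {X : Type*} [MetricSpace X] [ProperSpace X]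
    [MeasurableSpace X] [BorelSpace X] {G : Type*} [Group G] [TopologicalSpace G] [MulAction G X]
    [ContinuousSMul G X] (hproper : IsProperMap fun q : G × X => (q.1 • q.2, q.2)) {p : ℝ}
    (hp : 1 ≤ p) {μ ν : Measure X} [IsProbabilityMeasure μ] [IsProbabilityMeasure ν]
    (hD : DpAct G p μ ν = 0) : ∃ g : G, μ.map (fun x : X => g • x) = ν := by
  set W := fun g : G => Wp p (μ.map fun x : X => g • x) ν
  have : (comap W (𝓝 0)).NeBot := (nhds_zero_basis.comap W).neBot_iff.2 fun hε => by
    obtain ⟨g, hg⟩ := iInf_lt_iff.1 ((hD : ⨅ g, W g = 0) ▸ hε)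
    exact ⟨g, hg⟩
  obtain ⟨L, hL, hWL⟩ :=
    exists_isCompact_eventually_mem_of_tendsto_Wp (μ := μ) (ν := ν) hproper hp tendsto_comap
  obtain ⟨a, -, ha⟩ := hL.exists_clusterPt (le_principal_iff.2 hWL)
  exact ⟨a, map_smul_eq_of_clusterPt (μ := μ) (ν := ν) hp tendsto_comap ha⟩

theorem shape_distance_is_metric_general {X : Type*} [MetricSpace X]
    [ProperSpace X] [MeasurableSpace X] [BorelSpace X]
    (G : Type*) [Group G] [TopologicalSpace G]
    [MulAction G X] [ContinuousSMul G X]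
    (hiso : ∀ g : G, Isometry (fun x : X => g • x))
    (hproper : IsProperMap (fun q : G × X => (q.1 • q.2, q.2)))
    (p : ℝ) (hp : 1 ≤ p) :
    (∀ μ ν : Measure X, IsProbabilityMeasure μ → HasFinitePMoment p μ →
      IsProbabilityMeasure ν → HasFinitePMoment p ν → ∀ g : G,
        DpAct G p (μ.map (fun x : X => g • x)) ν = DpAct G p μ ν ∧
        DpAct G p μ (ν.map (fun x : X => g • x)) = DpAct G p μ ν) ∧
    (∀ μ : Measure X, IsProbabilityMeasure μ → HasFinitePMoment p μ →
      DpAct G p μ μ = 0) ∧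
    (∀ μ ν : Measure X, IsProbabilityMeasure μ → HasFinitePMoment p μ →
      IsProbabilityMeasure ν → HasFinitePMoment p ν →
      DpAct G p μ ν = DpAct G p ν μ) ∧
    (∀ μ ν σ : Measure X, IsProbabilityMeasure μ → HasFinitePMoment p μ →
      IsProbabilityMeasure ν → HasFinitePMoment p ν →
      IsProbabilityMeasure σ → HasFinitePMoment p σ →
      DpAct G p μ ν ≤ DpAct G p μ σ + DpAct G p σ ν) ∧
    (∀ μ ν : Measure X, IsProbabilityMeasure μ → HasFinitePMoment p μ →
      IsProbabilityMeasure ν → HasFinitePMoment p ν →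
      DpAct G p μ ν = 0 → ∃ g : G, μ.map (fun x : X => g • x) = ν) := by
  have hp₀ : 0 < p := zero_lt_one.trans_le hp
  exact ⟨fun μ ν _ _ _ _ g => ⟨DpAct_map_smul_left g, DpAct_map_smul_right hiso hp₀ g⟩,
    fun μ _ _ => DpAct_self hp₀,
    fun μ ν _ _ _ _ => DpAct_comm hiso hp₀,
    fun μ ν σ _ _ _ _ _ _ => DpAct_triangle hiso hp,
    fun μ ν _ _ _ _ hD => exists_map_smul_eq_of_DpAct_eq_zero hproper hp hD⟩

/-- If `X` is a proper Polish metric space and `G` a topological group acting continuously,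
properly and by isometries on `X`, then the shape distance `D_p` is a metric on the quotient
of `P_p(X)` by `μ ∼ ν ↔ ∃ g, g_#μ = ν`: it is well defined on classes, vanishes on the
diagonal, is symmetric, satisfies the triangle inequality, and `D_p(μ,ν) = 0` implies that
`μ` and `ν` are equivalent. -/
theorem shape_distance_is_metric {X : Type*} [MetricSpace X] [CompleteSpace X]
    [TopologicalSpace.SeparableSpace X] [ProperSpace X] [MeasurableSpace X] [BorelSpace X]
    (G : Type*) [Group G] [TopologicalSpace G] [IsTopologicalGroup G]
    [MulAction G X] [ContinuousSMul G X]
    (hiso : ∀ g : G, Isometry (fun x : X => g • x))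
    (hproper : IsProperMap (fun q : G × X => (q.1 • q.2, q.2)))
    (p : ℝ) (hp : 1 ≤ p) :
    (∀ μ ν : Measure X, IsProbabilityMeasure μ → HasFinitePMoment p μ →
      IsProbabilityMeasure ν → HasFinitePMoment p ν → ∀ g : G,
        DpAct G p (μ.map (fun x : X => g • x)) ν = DpAct G p μ ν ∧
        DpAct G p μ (ν.map (fun x : X => g • x)) = DpAct G p μ ν) ∧
    (∀ μ : Measure X, IsProbabilityMeasure μ → HasFinitePMoment p μ →
      DpAct G p μ μ = 0) ∧
    (∀ μ ν : Measure X, IsProbabilityMeasure μ → HasFinitePMoment p μ →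
      IsProbabilityMeasure ν → HasFinitePMoment p ν →
      DpAct G p μ ν = DpAct G p ν μ) ∧
    (∀ μ ν σ : Measure X, IsProbabilityMeasure μ → HasFinitePMoment p μ →
      IsProbabilityMeasure ν → HasFinitePMoment p ν →
      IsProbabilityMeasure σ → HasFinitePMoment p σ →
      DpAct G p μ ν ≤ DpAct G p μ σ + DpAct G p σ ν) ∧
    (∀ μ ν : Measure X, IsProbabilityMeasure μ → HasFinitePMoment p μ →
      IsProbabilityMeasure ν → HasFinitePMoment p ν →
      DpAct G p μ ν = 0 → ∃ g : G, μ.map (fun x : X => g • x) = ν) :=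
  shape_distance_is_metric_general G hiso hproper p hp

end
end
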